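/- arXiv:1604.02392 — 3 statements merged into one kernel-verified Lean document; each statement's English description precedes it below -/
import Mathlib

section
/- Let F be a complex n×n matrix, let ω ∈ (0,1], and consider the two-step recursion x_{ℓ+1} = (2−ω) x_ℓ − (1−ω) x_{ℓ−1} − ω F (x_ℓ − x_{ℓ−1}) for ℓ ≥ 0. Then the sequence (x_ℓ) converges (to some limit in ℂⁿ) for every pair of initial conditions x_{−1}, x₀ ∈ ℂⁿ if and only if ρ(ω F − (1−ω) I) < 1, where I is the n×n identity matrix. -/
/-!
Writing `d ℓ = x (ℓ + 1) - x ℓ`, the recursion says `d (ℓ + 1) = M d ℓ` with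
`M = (1 - ω) I - ω F`, so `x ℓ = x 0 + ∑_{j < ℓ} M ^ j d 0`. If `ρ(M) < 1`, Gelfand's formula makes
`‖M ^ j‖` decay geometrically and the series converges. Conversely, the partial sums of
`∑ M ^ j w` solve the recursion, so their convergence forces `M ^ j w → 0` for every `w`, hence
`M ^ j → 0`; then `‖M ^ k‖ < 1` for some `k ≥ 1`, and `ρ(M) ^ k ≤ ρ(M ^ k) ≤ ‖M ^ k‖ < 1`.
Finally `ρ(M) = ρ(-M) = ρ(ω F - (1 - ω) I)`.
-/

open Matrix Filter Topology ENNReal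

theorem spectralRadius_neg {𝕜 A : Type*} [NormedField 𝕜] [Ring A] [Algebra 𝕜 A] (a : A) :
    spectralRadius 𝕜 (-a) = spectralRadius 𝕜 a := by
  rw [spectralRadius, spectralRadius, ← spectrum.neg_eq, ← Set.image_neg_eq_neg, iSup_image]
  simp

section BanachAlgebra

variable {A : Type*} [NormedRing A] [NormedAlgebra ℂ A] [CompleteSpace A]

-- Unlike `spectrum.spectralRadius_le_nnnorm`, no `NormOneClass` is needed, so this also covers
-- the zero algebra (matrices of size `0`).
theorem spectralRadius_le_nnnorm_of_completeSpace (a : A) : spectralRadius ℂ a ≤ ‖a‖₊ := by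
  refine le_of_tendsto (spectrum.pow_nnnorm_pow_one_div_tendsto_nhds_spectralRadius a) ?_
  filter_upwards [eventually_ne_atTop 0] with n hn
  calc (‖a ^ n‖₊ : ℝ≥0∞) ^ (1 / n : ℝ) ≤ ((‖a‖₊ : ℝ≥0∞) ^ n) ^ (1 / n : ℝ) := by
        gcongr
        exact_mod_cast nnnorm_pow_le' a (Nat.pos_of_ne_zero hn)
    _ = ‖a‖₊ := by rw [one_div, ENNReal.pow_rpow_inv_natCast hn]

theorem spectralRadius_lt_one_of_tendsto_pow_zero {a : A}
    (h : Tendsto (a ^ ·) atTop (𝓝 0)) : spectralRadius ℂ a < 1 := by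
  obtain ⟨k, hk, hk0⟩ :=
    ((h.norm.eventually_lt_const (by simp : ‖(0 : A)‖ < 1)).and (eventually_ne_atTop 0)).exists
  have hpow : spectralRadius ℂ a ^ k < 1 :=
    calc spectralRadius ℂ a ^ k ≤ spectralRadius ℂ (a ^ k) :=
          spectrum.spectralRadius_pow_le a k hk0
      _ ≤ ‖a ^ k‖₊ := spectralRadius_le_nnnorm_of_completeSpace _
      _ < 1 := by exact_mod_cast hk
  exact not_le.mp fun h1 => (one_le_pow₀ h1).not_gt hpow

theorem summable_norm_pow_of_spectralRadius_lt_one {a : A} (h : spectralRadius ℂ a < 1) :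
    Summable (‖a ^ ·‖) := by
  obtain ⟨r, hρr, hr1⟩ := ENNReal.lt_iff_exists_nnreal_btwn.mp h
  refine Summable.of_norm_bounded_eventually_nat (summable_geometric_of_lt_one r.coe_nonneg
    (by exact_mod_cast hr1)) ?_
  have hgelfand := spectrum.pow_nnnorm_pow_one_div_tendsto_nhds_spectralRadius a
  filter_upwards [hgelfand.eventually_lt_const hρr, eventually_ne_atTop 0] with n hn hn0
  have := ENNReal.rpow_le_rpow hn.le (n.cast_nonneg : (0 : ℝ) ≤ n)
  rw [← ENNReal.rpow_mul, one_div, inv_mul_cancel₀ (by exact_mod_cast hn0), ENNReal.rpow_one,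
    ENNReal.rpow_natCast, ← ENNReal.coe_pow, ENNReal.coe_le_coe] at this
  simpa using (NNReal.coe_le_coe.mpr this)

end BanachAlgebra

namespace Matrix

variable {ι : Type*} [Fintype ι]

def IsIncrementOrbit {R : Type*} [Ring R] (M : Matrix ι ι R) (x : ℕ → ι → R) : Prop :=
  ∀ ℓ, x (ℓ + 2) - x (ℓ + 1) = M *ᵥ (x (ℓ + 1) - x ℓ)

variable [DecidableEq ι]

theorem tendsto_iff_forall_tendsto_mulVec {α m R : Type*} [TopologicalSpace R]
    [NonAssocSemiring R] [IsTopologicalSemiring R] {l : Filter α} {A : α → Matrix m ι R}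
    {B : Matrix m ι R} :
    Tendsto A l (𝓝 B) ↔ ∀ v, Tendsto (fun a => A a *ᵥ v) l (𝓝 (B *ᵥ v)) := by
  refine ⟨fun h v => ((continuous_id.matrix_mulVec continuous_const).tendsto B).comp h, fun h => ?_⟩
  refine tendsto_pi_nhds.2 fun i => tendsto_pi_nhds.2 fun j => ?_
  simpa only [mulVec_single_one, col_apply, Function.comp_def] using
    ((continuous_apply i).tendsto _).comp (h (Pi.single j 1))

section Recurrence

variable {R : Type*} [Ring R]

theorem IsIncrementOrbit.sub_eq_pow_mulVec {M : Matrix ι ι R} {x : ℕ → ι → R}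
    (hx : IsIncrementOrbit M x) (ℓ : ℕ) : x (ℓ + 1) - x ℓ = (M ^ ℓ) *ᵥ (x 1 - x 0) := by
  induction ℓ with
  | zero => simp
  | succ k ih => rw [hx k, ih, mulVec_mulVec, pow_succ']

theorem isIncrementOrbit_sum_range_pow_mulVec (M : Matrix ι ι R) (w : ι → R) :
    IsIncrementOrbit M fun m => ∑ j ∈ Finset.range m, (M ^ j) *ᵥ w := by
  intro ℓ
  simp only [Finset.sum_range_succ, add_sub_cancel_left, mulVec_mulVec, pow_succ']

end Recurrence

theorem relaxedStep_iff_sub_eq_mulVec {R : Type*} [CommRing R] (F : Matrix ι ι R) (α β : R)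
    (x₀ x₁ x₂ : ι → R) :
    x₂ = (1 + α) • x₁ - α • x₀ - β • F *ᵥ (x₁ - x₀) ↔
      x₂ - x₁ = (α • (1 : Matrix ι ι R) - β • F) *ᵥ (x₁ - x₀) := by
  rw [sub_mulVec, smul_mulVec, smul_mulVec, one_mulVec, sub_eq_iff_eq_add]
  constructor <;> rintro rfl <;> module

section LinftyOp

-- Any algebra norm would do: it only serves to apply the Banach-algebra lemmas above.
attribute [local instance] Matrix.linftyOpNormedRing Matrix.linftyOpNormedAlgebra

theorem forall_isIncrementOrbit_tendsto_iff_spectralRadius_lt_one (M : Matrix ι ι ℂ) :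
    (∀ x : ℕ → ι → ℂ, IsIncrementOrbit M x → ∃ l, Tendsto x atTop (𝓝 l)) ↔
      spectralRadius ℂ M < 1 := by
  constructor
  · intro hconv
    refine spectralRadius_lt_one_of_tendsto_pow_zero <|
      tendsto_iff_forall_tendsto_mulVec.2 fun w => ?_
    obtain ⟨l, hl⟩ := hconv _ (isIncrementOrbit_sum_range_pow_mulVec M w)
    simpa [Finset.sum_range_succ] using (hl.comp (tendsto_add_atTop_nat 1)).sub hl
  · intro hρ x hx
    set w := x 1 - x 0
    have hM : Summable (M ^ ·) := .of_norm (summable_norm_pow_of_spectralRadius_lt_one hρ)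
    have hS : Summable fun j => (M ^ j) *ᵥ w :=
      hM.map (mulVec.addMonoidHomLeft w) (continuous_id.matrix_mulVec continuous_const)
    have hx_eq : ∀ m, x m = x 0 + ∑ j ∈ Finset.range m, (M ^ j) *ᵥ w := fun m => by
      rw [← Finset.sum_congr rfl fun j _ => hx.sub_eq_pow_mulVec j, Finset.sum_range_sub]
      abel
    exact ⟨_, (tendsto_congr hx_eq).2 (tendsto_const_nhds.add hS.hasSum.tendsto_sum_nat)⟩

end LinftyOp

end Matrix

theorem relaxed_two_step_recursion_convergence_iff_spectralRadius_lt_one_general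
    (n : ℕ) (F : Matrix (Fin n) (Fin n) ℂ) (ω : ℝ) :
    (∀ x : ℕ → (Fin n → ℂ),
        (∀ ℓ : ℕ, x (ℓ + 2) = ((2 - ω : ℝ) : ℂ) • x (ℓ + 1) - ((1 - ω : ℝ) : ℂ) • x ℓ
            - ((ω : ℝ) : ℂ) • F.mulVec (x (ℓ + 1) - x ℓ)) →
        ∃ l : Fin n → ℂ, Tendsto x atTop (nhds l)) ↔
    spectralRadius ℂ (((ω : ℝ) : ℂ) • F - ((1 - ω : ℝ) : ℂ) • (1 : Matrix (Fin n) (Fin n) ℂ)) < 1 := by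
  have h2 : ((2 - ω : ℝ) : ℂ) = 1 + ((1 - ω : ℝ) : ℂ) := by push_cast; ring
  simp only [h2, relaxedStep_iff_sub_eq_mulVec]
  rw [← spectralRadius_neg, neg_sub]
  exact forall_isIncrementOrbit_tendsto_iff_spectralRadius_lt_one _

/-- Zero-stability of the relaxed (ω-modified) two-step recursion
`x_{ℓ+1} = (2−ω) x_ℓ − (1−ω) x_{ℓ−1} − ω F (x_ℓ − x_{ℓ−1})`: the sequence
converges for every pair of initial conditions iff the spectral radius of
`ω F − (1−ω) I` is `< 1`.  (Indices are shifted by one: `x 0` plays the role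
of `x_{−1}` and `x 1` that of `x₀`.) -/
theorem relaxed_two_step_recursion_convergence_iff_spectralRadius_lt_one
    (n : ℕ) (F : Matrix (Fin n) (Fin n) ℂ) (ω : ℝ) (hω : ω ∈ Set.Ioc (0 : ℝ) 1) :
    (∀ x : ℕ → (Fin n → ℂ),
        (∀ ℓ : ℕ, x (ℓ + 2) = ((2 - ω : ℝ) : ℂ) • x (ℓ + 1) - ((1 - ω : ℝ) : ℂ) • x ℓ
            - ((ω : ℝ) : ℂ) • F.mulVec (x (ℓ + 1) - x ℓ)) →
        ∃ l : Fin n → ℂ, Tendsto x atTop (nhds l)) ↔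
    spectralRadius ℂ (((ω : ℝ) : ℂ) • F - ((1 - ω : ℝ) : ℂ) • (1 : Matrix (Fin n) (Fin n) ℂ)) < 1 :=
  relaxed_two_step_recursion_convergence_iff_spectralRadius_lt_one_general n F ω
end

section
/- Let A ∈ ℝ^{n×n}, C ∈ ℝ^{p×n}, let Q ∈ ℝ^{n×n} and R ∈ ℝ^{p×p} be symmetric positive definite, and assume the pair (A, C) is observable. Define, for a symmetric positive semidefinite n×n matrix P, the Riccati map f(P) := A P Aᵀ − A P Cᵀ (R + C P Cᵀ)^{−1} C P Aᵀ + Q (note R + C P Cᵀ is positive definite, hence invertible). Then there exists a unique symmetric positive semidefinite matrix P* with f(P*) = P*; this P* is positive definite; and for every symmetric positive semidefinite initial matrix P₀, the iterates defined by P_{q+1} = f(P_q) converge to P* (entrywise) as q → ∞. -/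
open Matrix Filter

/-- A pair `(A, C)` is observable if `⋂_{k=0}^{n−1} ker (C A^k) = {0}`. -/
def ObservablePair {n p : ℕ} (A : Matrix (Fin n) (Fin n) ℝ)
    (C : Matrix (Fin p) (Fin n) ℝ) : Prop :=
  ∀ x : Fin n → ℝ, (∀ k < n, (C * A ^ k).mulVec x = 0) → x = 0

/-- The combined prediction–correction Riccati map of the discrete-time Kalman filter:
`f(P) = A P Aᵀ − A P Cᵀ (R + C P Cᵀ)⁻¹ C P Aᵀ + Q`. -/
noncomputable def riccatiMap {n p : ℕ} (A : Matrix (Fin n) (Fin n) ℝ)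
    (C : Matrix (Fin p) (Fin n) ℝ) (Q : Matrix (Fin n) (Fin n) ℝ)
    (R : Matrix (Fin p) (Fin p) ℝ) (P : Matrix (Fin n) (Fin n) ℝ) :
    Matrix (Fin n) (Fin n) ℝ :=
  A * P * Aᵀ - A * P * Cᵀ * (R + C * P * Cᵀ)⁻¹ * C * P * Aᵀ + Q

/-!
For a fixed gain `K`, the covariance recursion `g_K P = (A - K C) P (A - K C)ᵀ + K R Kᵀ + Q` is
affine and monotone in `P`, and completing the square gives
`g_K P = f P + (K - K_P) (R + C P Cᵀ) (K - K_P)ᵀ` with the Kalman gain `K_P`. Hence `f` is the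
pointwise minimum of the `g_K`: it is monotone and concave on the positive semidefinite cone, and
`f 0 = Q`.

Observability gives time-varying deadbeat gains `K₀, …, K_{n-1}` with
`(A - K_{n-1} C) ⋯ (A - K₀ C) = 0`, and comparing `f` with these `g_{K_j}` bounds `f^[q] P` by one
matrix `B` for all `q ≥ n` and all `P ≥ 0`. So `f^[q] 0` increases to a fixed point `P⋆`.
Choosing `ε > 0` with `ε B ≤ Q`, every orbit lies between `ε P⋆` and `ε⁻¹ P⋆` after `n + 1` steps,
and concavity together with `ε P⋆ ≤ Q` shows that `f` shrinks the margins `a, b` in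
`(1 - a) P⋆ ≤ X ≤ (1 + b) P⋆` by the factor `1 - ε`. This gives attractivity, and uniqueness.
-/

open Topology
open scoped MatrixOrder

lemma LinearMap.exists_apply_apply_eq_self {K V W : Type*} [DivisionRing K] [AddCommGroup V]
    [Module K V] [AddCommGroup W] [Module K W] (f : V →ₗ[K] W) :
    ∃ g : W →ₗ[K] V, ∀ v, f (g (f v)) = f v := by
  obtain ⟨g₀, hg₀⟩ := f.rangeRestrict.exists_rightInverse_of_surjective f.range_rangeRestrict
  obtain ⟨g, hg⟩ := g₀.exists_extend
  refine ⟨g, fun v => ?_⟩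
  have h := congr_arg Subtype.val (LinearMap.congr_fun hg₀ (f.rangeRestrict v))
  rw [← hg] at h
  simpa using h

lemma ConcaveOn.map_smul_add_le {E β : Type*} [AddCommGroup E] [Module ℝ E] [AddCommGroup β]
    [PartialOrder β] [IsOrderedAddMonoid β] [Module ℝ β] [PosSMulMono ℝ β] {s : Set E}
    {f : E → β} (hf : ConcaveOn ℝ s f) {x : E} (h0 : 0 ∈ s) {t : ℝ} (ht : 1 ≤ t)
    (htx : t • x ∈ s) : f (t • x) + (t - 1) • f 0 ≤ t • f x := by
  have ht0 : 0 < t := one_pos.trans_le ht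
  have h := hf.2 htx h0 (inv_nonneg.2 ht0.le) (sub_nonneg.2 (inv_le_one_of_one_le₀ ht))
    (add_sub_cancel _ _)
  rw [smul_zero, add_zero, smul_smul, inv_mul_cancel₀ ht0.ne', one_smul] at h
  calc f (t • x) + (t - 1) • f 0 = t • (t⁻¹ • f (t • x) + (1 - t⁻¹) • f 0) := by
        rw [smul_add, smul_smul, smul_smul, mul_inv_cancel₀ ht0.ne', one_smul, mul_sub, mul_one,
          mul_inv_cancel₀ ht0.ne']
    _ ≤ t • f x := smul_le_smul_of_nonneg_left h ht0.le

namespace Matrix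

section LoewnerOrder

variable {ι : Type*}

lemma transpose_eq_self_of_nonneg {P : Matrix ι ι ℝ} (hP : 0 ≤ P) : Pᵀ = P := by
  rw [← conjTranspose_eq_transpose_of_trivial, hP.posSemidef.isHermitian.eq]

lemma mul_mul_transpose_nonneg {κ : Type*} [Fintype ι] [Finite κ] {P : Matrix ι ι ℝ} (hP : 0 ≤ P)
    (M : Matrix κ ι ℝ) : 0 ≤ M * P * Mᵀ := by
  simpa using (hP.posSemidef.mul_mul_conjTranspose_same M).nonneg

lemma mul_mul_transpose_le_mul_mul_transpose {κ : Type*} [Fintype ι] [Finite κ]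
    {X Y : Matrix ι ι ℝ} (h : X ≤ Y) (M : Matrix κ ι ℝ) : M * X * Mᵀ ≤ M * Y * Mᵀ := by
  rw [← sub_nonneg, ← Matrix.sub_mul, ← Matrix.mul_sub]
  exact mul_mul_transpose_nonneg (sub_nonneg.2 h) M

lemma PosDef.add_mul_mul_transpose {κ : Type*} [Fintype ι] [Finite κ] {R : Matrix κ κ ℝ}
    (hR : R.PosDef) {P : Matrix ι ι ℝ} (hP : 0 ≤ P) (C : Matrix κ ι ℝ) :
    (R + C * P * Cᵀ).PosDef :=
  hR.add_posSemidef (mul_mul_transpose_nonneg hP C).posSemidef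

lemma PosSemidef.abs_apply_le {D : Matrix ι ι ℝ} (hD : D.PosSemidef) (i j : ι) :
    |D i j| ≤ (D i i + D j j) / 2 := by
  classical
  have hji : D j i = D i j := hD.1.apply i j
  have h₁ := hD.2 (.single i 1 + .single j 1)
  have h₂ := hD.2 (.single i 1 - .single j 1)
  simp only [star_trivial, Finsupp.sum_add_index, Finsupp.sum_sub_index, Finsupp.sum_single_index,
    mul_add, add_mul, sub_mul, mul_sub, mul_one, one_mul, mul_zero, zero_mul, Finsupp.sum_add,
    Finsupp.sum_sub, implies_true] at h₁ h₂
  rw [abs_le]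
  constructor <;> linarith

lemma IsHermitian.apply_eq_polarization [Fintype ι] [DecidableEq ι] {M : Matrix ι ι ℝ}
    (hM : M.IsHermitian) (i j : ι) :
    M i j = ((Pi.single i 1 + Pi.single j 1) ⬝ᵥ M *ᵥ (Pi.single i 1 + Pi.single j 1)
      - (Pi.single i 1 - Pi.single j 1) ⬝ᵥ M *ᵥ (Pi.single i 1 - Pi.single j 1)) / 4 := by
  have hji : M j i = M i j := hM.apply i j
  simp only [mulVec_add, mulVec_sub, mulVec_single, MulOpposite.op_one, one_smul, dotProduct_add,
    add_dotProduct, dotProduct_sub, sub_dotProduct, single_dotProduct, col_apply, one_mul, hji]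
  ring

variable [Fintype ι]

lemma isClosed_setOf_nonneg : IsClosed {M : Matrix ι ι ℝ | 0 ≤ M} := by
  simp_rw [nonneg_iff_posSemidef, posSemidef_iff_dotProduct_mulVec, Set.ofPred_and,
    Set.ofPred_forall]
  refine (isClosed_eq ?_ continuous_id).inter (isClosed_iInter fun x => isClosed_le ?_ ?_)
  all_goals fun_prop

instance : OrderClosedTopology (Matrix ι ι ℝ) where
  isClosed_le' := isClosed_le_of_isClosed_nonneg isClosed_setOf_nonneg

omit [Fintype ι] in
lemma tendsto_of_tendsto_of_tendsto_of_le_of_le {α : Type*} {l : Filter α}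
    {L X U : α → Matrix ι ι ℝ} {M : Matrix ι ι ℝ} (hL : Tendsto L l (𝓝 M))
    (hU : Tendsto U l (𝓝 M)) (hLX : ∀ a, L a ≤ X a) (hXU : ∀ a, X a ≤ U a) :
    Tendsto X l (𝓝 M) := by
  have hE : Tendsto (fun a => U a - L a) l (𝓝 0) := by simpa using hU.sub hL
  have hD : Tendsto (fun a => X a - L a) l (𝓝 0) := by
    refine tendsto_pi_nhds.2 fun i => tendsto_pi_nhds.2 fun j => ?_
    have hEij := ((hE.apply_nhds i).apply_nhds i).add ((hE.apply_nhds j).apply_nhds j)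
    refine squeeze_zero_norm (fun a => ?_) (by simpa using hEij.div_const 2)
    have hXU_diag i : X a i i ≤ U a i i := by
      simpa using (le_iff.1 (hXU a)).diag_nonneg (i := i)
    have := (le_iff.1 (hLX a)).abs_apply_le i j
    simp only [Real.norm_eq_abs, sub_apply] at this ⊢
    linarith [hXU_diag i, hXU_diag j]
  simpa using hL.add hD

lemma exists_tendsto_of_monotone_of_le {P : ℕ → Matrix ι ι ℝ} {B : Matrix ι ι ℝ}
    (hP : Monotone P) (hPB : ∀ q, P q ≤ B) : ∃ L, Tendsto P atTop (𝓝 L) := by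
  classical
  set D := fun q => P q - P 0 with hD
  have hquad x : ∃ l, Tendsto (fun q => x ⬝ᵥ D q *ᵥ x) atTop (𝓝 l) := by
    refine ⟨_, tendsto_atTop_ciSup (fun q r hqr => ?_) ⟨x ⬝ᵥ (B - P 0) *ᵥ x, ?_⟩⟩
    · simpa [hD, sub_mulVec] using (le_iff.1 (hP hqr)).dotProduct_mulVec_nonneg x
    · rintro _ ⟨q, rfl⟩
      simpa [hD, sub_mulVec] using (le_iff.1 (hPB q)).dotProduct_mulVec_nonneg x
  choose l hl using hquad
  set L : Matrix ι ι ℝ := of fun i j =>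
    (l (Pi.single i 1 + Pi.single j 1) - l (Pi.single i 1 - Pi.single j 1)) / 4
  have hDL : Tendsto D atTop (𝓝 L) := by
    refine tendsto_pi_nhds.2 fun i => tendsto_pi_nhds.2 fun j => ?_
    refine (((hl _).sub (hl _)).div_const 4).congr fun q => ?_
    exact ((le_iff.1 (hP (Nat.zero_le q))).isHermitian.apply_eq_polarization i j).symm
  exact ⟨P 0 + L, by simpa [hD] using (tendsto_const_nhds (x := P 0)).add hDL⟩

lemma PosDef.exists_pos_smul_le [DecidableEq ι] {Q B : Matrix ι ι ℝ} (hQ : Q.PosDef)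
    (hB : B.IsHermitian) : ∃ ε : ℝ, 0 < ε ∧ ε • B ≤ Q := by
  cases isEmpty_or_nonempty ι
  · exact ⟨1, one_pos, (Subsingleton.elim _ _).le⟩
  obtain ⟨c, hc, hcQ⟩ := (CFC.exists_pos_algebraMap_le_iff hQ.isHermitian.isSelfAdjoint).2
    fun _ => hQ.isStrictlyPositive.spectrum_pos
  obtain ⟨r, hr⟩ := (ContinuousFunctionalCalculus.isCompact_spectrum (R := ℝ) B).bddAbove
  have hr1 : 0 < max r 1 := lt_max_of_lt_right one_pos
  have hBr : B ≤ algebraMap ℝ _ (max r 1) :=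
    le_algebraMap_of_spectrum_le (fun x hx => (hr hx).trans (le_max_left r 1)) hB.isSelfAdjoint
  refine ⟨c / max r 1, div_pos hc hr1, ?_⟩
  calc (c / max r 1) • B ≤ (c / max r 1) • algebraMap ℝ _ (max r 1) :=
        smul_le_smul_of_nonneg_left hBr (div_pos hc hr1).le
    _ = algebraMap ℝ _ c := by rw [Algebra.smul_def, ← map_mul, div_mul_cancel₀ c hr1.ne']
    _ ≤ Q := hcQ

end LoewnerOrder

lemma sub_mul_inv_mul_transpose_sub {m k : Type*} [Fintype k] [DecidableEq k]
    (K X : Matrix m k ℝ) {S : Matrix k k ℝ} (hS : Sᵀ = S) (hdet : IsUnit S.det) :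
    (K - X * S⁻¹) * S * (K - X * S⁻¹)ᵀ = K * S * Kᵀ - K * Xᵀ - X * Kᵀ + X * S⁻¹ * Xᵀ := by
  have h₁ : S⁻¹ * S = 1 := nonsing_inv_mul S hdet
  have h₂ : S * S⁻¹ = 1 := mul_nonsing_inv S hdet
  rw [transpose_sub, transpose_mul, transpose_nonsing_inv, hS]
  simp only [Matrix.sub_mul, Matrix.mul_sub, Matrix.mul_assoc]
  simp only [← Matrix.mul_assoc S⁻¹ S, ← Matrix.mul_assoc S S⁻¹, h₁, h₂, Matrix.one_mul]
  abel

section Deadbeat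

variable {𝕜 ι κ : Type*} [Field 𝕜] [Fintype ι] [DecidableEq ι] (A : Matrix ι ι 𝕜)
  (C : Matrix κ ι 𝕜)

def unobservedStates (j : ℕ) : Submodule 𝕜 (ι → 𝕜) :=
  (⨅ k < j, LinearMap.ker (C * A ^ k).mulVecLin).map (A ^ j).mulVecLin

lemma unobservedStates_zero : unobservedStates A C 0 = ⊤ := by
  simp [unobservedStates]

lemma map_inf_ker_le_unobservedStates_succ (j : ℕ) :
    (unobservedStates A C j ⊓ LinearMap.ker C.mulVecLin).map A.mulVecLin ≤
      unobservedStates A C (j + 1) := by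
  rintro _ ⟨_, ⟨⟨x, hx, rfl⟩, hCx⟩, rfl⟩
  simp only [SetLike.mem_coe, Submodule.mem_iInf, LinearMap.mem_ker, mulVecLin_apply] at hx hCx
  refine ⟨x, ?_, by simp [pow_succ', mulVec_mulVec]⟩
  simp only [SetLike.mem_coe, Submodule.mem_iInf, LinearMap.mem_ker, mulVecLin_apply]
  intro k hk
  rcases Nat.lt_succ_iff_lt_or_eq.1 hk with hk | rfl
  · exact hx k hk
  · rwa [← mulVec_mulVec]

variable [Fintype κ]

omit [DecidableEq ι] in
lemma exists_gain_mulVec_mem [DecidableEq κ] (V : Submodule 𝕜 (ι → 𝕜)) :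
    ∃ K : Matrix ι κ 𝕜, ∀ x ∈ V,
      (A - K * C) *ᵥ x ∈ (V ⊓ LinearMap.ker C.mulVecLin).map A.mulVecLin := by
  obtain ⟨g, hg⟩ := (C.mulVecLin ∘ₗ V.subtype).exists_apply_apply_eq_self
  refine ⟨LinearMap.toMatrix' (A.mulVecLin ∘ₗ V.subtype ∘ₗ g), fun x hx => ?_⟩
  refine ⟨x - g (C *ᵥ x), ⟨V.sub_mem hx (g _).2, ?_⟩, ?_⟩
  · have := hg ⟨x, hx⟩
    simp only [LinearMap.comp_apply, Submodule.subtype_apply, mulVecLin_apply] at this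
    simp [mulVec_sub, this]
  · simp [sub_mulVec, mulVec_sub, ← mulVec_mulVec]

def gainTransition (K : ℕ → Matrix ι κ 𝕜) : ℕ → Matrix ι ι 𝕜
  | 0 => 1
  | j + 1 => (A - K j * C) * gainTransition K j

end Deadbeat

end Matrix

lemma ObservablePair.exists_gainTransition_eq_zero {n p : ℕ} {A : Matrix (Fin n) (Fin n) ℝ}
    {C : Matrix (Fin p) (Fin n) ℝ} (hobs : ObservablePair A C) :
    ∃ K, gainTransition A C K n = 0 := by
  choose K hK using fun j => exists_gain_mulVec_mem A C (unobservedStates A C j)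
  have hmem j v : gainTransition A C K j *ᵥ v ∈ unobservedStates A C j := by
    induction j generalizing v with
    | zero => simp [unobservedStates_zero]
    | succ j ih =>
      rw [gainTransition, ← mulVec_mulVec]
      exact map_inf_ker_le_unobservedStates_succ A C j (hK j _ (ih v))
  have hbot : unobservedStates A C n = ⊥ := by
    have : (⨅ k < n, LinearMap.ker (C * A ^ k).mulVecLin) = ⊥ :=
      eq_bot_iff.2 fun x hx => hobs x (by simpa [Submodule.mem_iInf] using hx)
    rw [unobservedStates, this, Submodule.map_bot]
  refine ⟨K, ext_of_mulVec_single fun i => ?_⟩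
  have := hmem n (Pi.single i 1)
  rw [hbot, Submodule.mem_bot] at this
  rw [this, zero_mulVec]

section Riccati

variable {n p : ℕ} (A : Matrix (Fin n) (Fin n) ℝ) (C : Matrix (Fin p) (Fin n) ℝ)
  (Q : Matrix (Fin n) (Fin n) ℝ) (R : Matrix (Fin p) (Fin p) ℝ)

noncomputable def kalmanGain (P : Matrix (Fin n) (Fin n) ℝ) : Matrix (Fin n) (Fin p) ℝ :=
  A * P * Cᵀ * (R + C * P * Cᵀ)⁻¹

/-- The covariance recursion of the predictor `x̂ ↦ A x̂ + K (y - C x̂)` with a fixed gain `K`. -/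
def riccatiMapOfGain (K : Matrix (Fin n) (Fin p) ℝ) (P : Matrix (Fin n) (Fin n) ℝ) :
    Matrix (Fin n) (Fin n) ℝ :=
  (A - K * C) * P * (A - K * C)ᵀ + K * R * Kᵀ + Q

def riccatiMapOfGains (K : ℕ → Matrix (Fin n) (Fin p) ℝ) :
    ℕ → Matrix (Fin n) (Fin n) ℝ → Matrix (Fin n) (Fin n) ℝ
  | 0, P => P
  | j + 1, P => riccatiMapOfGain A C Q R (K j) (riccatiMapOfGains K j P)

variable {A C Q R}

lemma riccatiMapOfGain_eq (hR : R.PosDef) {P : Matrix (Fin n) (Fin n) ℝ} (hP : 0 ≤ P)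
    (K : Matrix (Fin n) (Fin p) ℝ) :
    riccatiMapOfGain A C Q R K P = riccatiMap A C Q R P
      + (K - kalmanGain A C R P) * (R + C * P * Cᵀ) * (K - kalmanGain A C R P)ᵀ := by
  have hS := hR.add_mul_mul_transpose hP C
  have hX : (A * P * Cᵀ)ᵀ = C * P * Aᵀ := by
    simp only [transpose_mul, transpose_transpose, transpose_eq_self_of_nonneg hP,
      Matrix.mul_assoc]
  rw [kalmanGain, sub_mul_inv_mul_transpose_sub _ _
    (transpose_eq_self_of_nonneg hS.posSemidef.nonneg) hS.det_pos.ne'.isUnit, hX,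
    riccatiMapOfGain, riccatiMap]
  simp only [transpose_sub, transpose_mul, Matrix.mul_sub, Matrix.sub_mul, Matrix.mul_add,
    Matrix.add_mul, Matrix.mul_assoc]
  abel

lemma riccatiMapOfGain_kalmanGain (hR : R.PosDef) {P : Matrix (Fin n) (Fin n) ℝ} (hP : 0 ≤ P) :
    riccatiMapOfGain A C Q R (kalmanGain A C R P) P = riccatiMap A C Q R P := by
  simp [riccatiMapOfGain_eq hR hP]

lemma riccatiMap_le_riccatiMapOfGain (hR : R.PosDef) {P : Matrix (Fin n) (Fin n) ℝ}
    (hP : 0 ≤ P) (K : Matrix (Fin n) (Fin p) ℝ) :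
    riccatiMap A C Q R P ≤ riccatiMapOfGain A C Q R K P := by
  rw [riccatiMapOfGain_eq hR hP]
  exact le_add_of_nonneg_right
    (mul_mul_transpose_nonneg (hR.add_mul_mul_transpose hP C).posSemidef.nonneg _)

lemma riccatiMapOfGain_mono (K : Matrix (Fin n) (Fin p) ℝ) :
    Monotone (riccatiMapOfGain A C Q R K) := fun _ _ h => by
  unfold riccatiMapOfGain
  gcongr
  exact mul_mul_transpose_le_mul_mul_transpose h _

lemma riccatiMapOfGain_add (K : Matrix (Fin n) (Fin p) ℝ) (X Y : Matrix (Fin n) (Fin n) ℝ) :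
    riccatiMapOfGain A C Q R K (X + Y) =
      (A - K * C) * X * (A - K * C)ᵀ + riccatiMapOfGain A C Q R K Y := by
  simp only [riccatiMapOfGain, Matrix.mul_add, Matrix.add_mul]
  abel

lemma riccatiMapOfGain_smul_add_smul (K : Matrix (Fin n) (Fin p) ℝ)
    (X Y : Matrix (Fin n) (Fin n) ℝ) {a b : ℝ} (hab : a + b = 1) :
    riccatiMapOfGain A C Q R K (a • X + b • Y) =
      a • riccatiMapOfGain A C Q R K X + b • riccatiMapOfGain A C Q R K Y := by
  obtain rfl : b = 1 - a := by linarith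
  simp only [riccatiMapOfGain, Matrix.mul_add, Matrix.add_mul, Matrix.mul_smul, Matrix.smul_mul]
  module

@[simp]
lemma riccatiMap_zero : riccatiMap A C Q R 0 = Q := by
  simp [riccatiMap]

lemma riccatiMap_monotoneOn (hR : R.PosDef) : MonotoneOn (riccatiMap A C Q R) (Set.Ici 0) :=
  fun X hX Y hY h => calc
    riccatiMap A C Q R X ≤ riccatiMapOfGain A C Q R (kalmanGain A C R Y) X :=
      riccatiMap_le_riccatiMapOfGain hR hX _
    _ ≤ riccatiMapOfGain A C Q R (kalmanGain A C R Y) Y := riccatiMapOfGain_mono _ h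
    _ = riccatiMap A C Q R Y := riccatiMapOfGain_kalmanGain hR hY

lemma riccatiMap_concaveOn (hR : R.PosDef) : ConcaveOn ℝ (Set.Ici 0) (riccatiMap A C Q R) := by
  refine ⟨convex_Ici 0, fun X hX Y hY a b ha hb hab => ?_⟩
  set K := kalmanGain A C R (a • X + b • Y)
  calc a • riccatiMap A C Q R X + b • riccatiMap A C Q R Y
      ≤ a • riccatiMapOfGain A C Q R K X + b • riccatiMapOfGain A C Q R K Y :=
        add_le_add (smul_le_smul_of_nonneg_left (riccatiMap_le_riccatiMapOfGain hR hX K) ha)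
          (smul_le_smul_of_nonneg_left (riccatiMap_le_riccatiMapOfGain hR hY K) hb)
    _ = riccatiMap A C Q R (a • X + b • Y) := by
      rw [← riccatiMapOfGain_smul_add_smul K X Y hab,
        riccatiMapOfGain_kalmanGain hR ((convex_Ici 0) hX hY ha hb hab)]

lemma le_riccatiMap (hR : R.PosDef) {P : Matrix (Fin n) (Fin n) ℝ} (hP : 0 ≤ P) :
    Q ≤ riccatiMap A C Q R P := by
  simpa using riccatiMap_monotoneOn (A := A) (C := C) (Q := Q) hR Set.self_mem_Ici hP hP

lemma riccatiMap_mapsTo (hQ : 0 ≤ Q) (hR : R.PosDef) :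
    Set.MapsTo (riccatiMap A C Q R) (Set.Ici 0) (Set.Ici 0) :=
  fun _ hP => hQ.trans (le_riccatiMap hR hP)

lemma riccatiMap_posDef (hQ : Q.PosDef) (hR : R.PosDef) {P : Matrix (Fin n) (Fin n) ℝ}
    (hP : 0 ≤ P) : (riccatiMap A C Q R P).PosDef := by
  have h := hQ.add_posSemidef (le_iff.1 (le_riccatiMap (A := A) (C := C) (Q := Q) hR hP))
  rwa [add_sub_cancel] at h

lemma riccatiMap_continuousAt (hR : R.PosDef) {P : Matrix (Fin n) (Fin n) ℝ} (hP : 0 ≤ P) :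
    ContinuousAt (riccatiMap A C Q R) P := by
  have hinv : ContinuousAt (fun X : Matrix (Fin n) (Fin n) ℝ => (R + C * X * Cᵀ)⁻¹) P :=
    (continuousAt_matrix_inv _ (NormedRing.inverse_continuousAt
      (hR.add_mul_mul_transpose hP C).det_pos.ne'.isUnit.unit)).comp
      (f := fun X => R + C * X * Cᵀ) (by fun_prop)
  unfold riccatiMap
  fun_prop

lemma riccatiMapOfGains_eq_gainTransition_add (K : ℕ → Matrix (Fin n) (Fin p) ℝ) (j : ℕ)
    (P : Matrix (Fin n) (Fin n) ℝ) :
    riccatiMapOfGains A C Q R K j P =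
      gainTransition A C K j * P * (gainTransition A C K j)ᵀ + riccatiMapOfGains A C Q R K j 0 := by
  induction j with
  | zero => simp [riccatiMapOfGains, gainTransition]
  | succ j ih =>
    rw [riccatiMapOfGains, ih, riccatiMapOfGain_add, riccatiMapOfGains, gainTransition,
      transpose_mul]
    simp only [Matrix.mul_assoc]

lemma riccatiMap_iterate_le_riccatiMapOfGains (hQ : 0 ≤ Q) (hR : R.PosDef)
    {P : Matrix (Fin n) (Fin n) ℝ} (hP : 0 ≤ P) (K : ℕ → Matrix (Fin n) (Fin p) ℝ) (j : ℕ) :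
    (riccatiMap A C Q R)^[j] P ≤ riccatiMapOfGains A C Q R K j P := by
  induction j with
  | zero => exact le_rfl
  | succ j ih =>
    rw [Function.iterate_succ_apply']
    exact (riccatiMap_le_riccatiMapOfGain hR ((riccatiMap_mapsTo hQ hR).iterate j hP) _).trans
      (riccatiMapOfGain_mono _ ih)

theorem exists_riccatiMap_iterate_le (hQ : 0 ≤ Q) (hR : R.PosDef) (hobs : ObservablePair A C) :
    ∃ B, ∀ P, 0 ≤ P → ∀ q, n ≤ q → (riccatiMap A C Q R)^[q] P ≤ B := by
  obtain ⟨K, hK⟩ := hobs.exists_gainTransition_eq_zero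
  refine ⟨riccatiMapOfGains A C Q R K n 0, fun P hP q hq => ?_⟩
  obtain ⟨r, rfl⟩ := Nat.exists_eq_add_of_le hq
  rw [Function.iterate_add_apply]
  calc (riccatiMap A C Q R)^[n] ((riccatiMap A C Q R)^[r] P)
      ≤ riccatiMapOfGains A C Q R K n ((riccatiMap A C Q R)^[r] P) :=
        riccatiMap_iterate_le_riccatiMapOfGains hQ hR ((riccatiMap_mapsTo hQ hR).iterate r hP) K n
    _ = riccatiMapOfGains A C Q R K n 0 := by
        rw [riccatiMapOfGains_eq_gainTransition_add _ n, hK, Matrix.zero_mul, Matrix.zero_mul,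
          zero_add]

theorem exists_riccatiMap_fixedPoint (hQ : 0 ≤ Q) (hR : R.PosDef) (hobs : ObservablePair A C) :
    ∃ Pstar, 0 ≤ Pstar ∧ riccatiMap A C Q R Pstar = Pstar := by
  obtain ⟨B, hB⟩ := exists_riccatiMap_iterate_le hQ hR hobs
  set P := fun q => (riccatiMap A C Q R)^[q] 0
  have hP_succ q : P (q + 1) = riccatiMap A C Q R (P q) := Function.iterate_succ_apply' _ q 0
  have hP_nonneg q : 0 ≤ P q := (riccatiMap_mapsTo hQ hR).iterate q Set.self_mem_Ici
  have hmono : Monotone P := by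
    refine monotone_nat_of_le_succ fun q => ?_
    induction q with
    | zero => exact hP_nonneg 1
    | succ q ih =>
      calc P (q + 1) = riccatiMap A C Q R (P q) := hP_succ q
        _ ≤ riccatiMap A C Q R (P (q + 1)) :=
          riccatiMap_monotoneOn hR (hP_nonneg q) (hP_nonneg (q + 1)) ih
        _ = P (q + 1 + 1) := (hP_succ (q + 1)).symm
  obtain ⟨L, hL⟩ := exists_tendsto_of_monotone_of_le hmono fun q =>
    (hmono (Nat.le_add_right q n)).trans (hB 0 le_rfl (q + n) (Nat.le_add_left n q))
  have hL0 : 0 ≤ L := hmono.ge_of_tendsto hL 0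
  refine ⟨L, hL0, tendsto_nhds_unique ((riccatiMap_continuousAt hR hL0).tendsto.comp hL) ?_⟩
  simpa [P, Function.comp_def, ← Function.iterate_succ_apply'] using
    (tendsto_add_atTop_iff_nat 1).2 hL

lemma riccatiMap_mem_Icc_smul (hR : R.PosDef) {Pstar : Matrix (Fin n) (Fin n) ℝ} (hPs : 0 ≤ Pstar)
    (hfix : riccatiMap A C Q R Pstar = Pstar) {ε : ℝ} (hε : ε • Pstar ≤ Q) {a b : ℝ} (ha : 0 ≤ a)
    (ha1 : a ≤ 1) (hb : 0 ≤ b) {X : Matrix (Fin n) (Fin n) ℝ}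
    (hX : X ∈ Set.Icc ((1 - a) • Pstar) ((1 + b) • Pstar)) :
    riccatiMap A C Q R X ∈ Set.Icc ((1 - (1 - ε) * a) • Pstar) ((1 + (1 - ε) * b) • Pstar) := by
  have hconc := riccatiMap_concaveOn (A := A) (C := C) (Q := Q) hR
  have hlo : 0 ≤ (1 - a) • Pstar := smul_nonneg (sub_nonneg.2 ha1) hPs
  have hhi : 0 ≤ (1 + b) • Pstar := smul_nonneg (by linarith) hPs
  have hX0 : 0 ≤ X := hlo.trans hX.1
  constructor
  · calc (1 - (1 - ε) * a) • Pstar = (1 - a) • Pstar + a • (ε • Pstar) := by module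
      _ ≤ (1 - a) • riccatiMap A C Q R Pstar + a • riccatiMap A C Q R 0 := by
        rw [hfix, riccatiMap_zero]
        exact add_le_add le_rfl (smul_le_smul_of_nonneg_left hε ha)
      _ ≤ riccatiMap A C Q R ((1 - a) • Pstar + a • 0) :=
        hconc.2 hPs Set.self_mem_Ici (sub_nonneg.2 ha1) ha (sub_add_cancel 1 a)
      _ ≤ riccatiMap A C Q R X := by
        rw [smul_zero, add_zero]
        exact riccatiMap_monotoneOn hR hlo hX0 hX.1
  · calc riccatiMap A C Q R X ≤ riccatiMap A C Q R ((1 + b) • Pstar) :=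
        riccatiMap_monotoneOn hR hX0 hhi hX.2
      _ ≤ (1 + b) • riccatiMap A C Q R Pstar - b • riccatiMap A C Q R 0 := by
        have h := hconc.map_smul_add_le Set.self_mem_Ici (le_add_of_nonneg_right hb) hhi
        rw [add_sub_cancel_left] at h
        exact le_sub_iff_add_le.2 h
      _ ≤ (1 + b) • Pstar - b • (ε • Pstar) := by
        rw [hfix, riccatiMap_zero]
        exact sub_le_sub_left (smul_le_smul_of_nonneg_left hε hb) _
      _ = (1 + (1 - ε) * b) • Pstar := by module

lemma riccatiMap_iterate_mem_Icc_smul (hR : R.PosDef) {Pstar : Matrix (Fin n) (Fin n) ℝ}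
    (hPs : 0 ≤ Pstar) (hfix : riccatiMap A C Q R Pstar = Pstar) {ε : ℝ} (hε0 : 0 ≤ ε)
    (hε1 : ε ≤ 1) (hε : ε • Pstar ≤ Q) {a b : ℝ} (ha : 0 ≤ a) (ha1 : a ≤ 1) (hb : 0 ≤ b)
    {X : Matrix (Fin n) (Fin n) ℝ} (hX : X ∈ Set.Icc ((1 - a) • Pstar) ((1 + b) • Pstar))
    (q : ℕ) :
    (riccatiMap A C Q R)^[q] X ∈
      Set.Icc ((1 - (1 - ε) ^ q * a) • Pstar) ((1 + (1 - ε) ^ q * b) • Pstar) := by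
  induction q with
  | zero => simpa using hX
  | succ q ih =>
    have hpow0 : 0 ≤ (1 - ε) ^ q := pow_nonneg (sub_nonneg.2 hε1) q
    have hpow1 : (1 - ε) ^ q ≤ 1 := pow_le_one₀ (sub_nonneg.2 hε1) (by linarith)
    rw [Function.iterate_succ_apply', pow_succ', mul_assoc, mul_assoc]
    exact riccatiMap_mem_Icc_smul hR hPs hfix hε (mul_nonneg hpow0 ha)
      (mul_le_one₀ hpow1 ha ha1) (mul_nonneg hpow0 hb) ih

theorem tendsto_riccatiMap_iterate (hQ : Q.PosDef) (hR : R.PosDef) (hobs : ObservablePair A C)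
    {Pstar : Matrix (Fin n) (Fin n) ℝ} (hPs : 0 ≤ Pstar) (hfix : riccatiMap A C Q R Pstar = Pstar)
    {P₀ : Matrix (Fin n) (Fin n) ℝ} (hP₀ : 0 ≤ P₀) :
    Tendsto (fun q => (riccatiMap A C Q R)^[q] P₀) atTop (𝓝 Pstar) := by
  obtain ⟨B, hB⟩ := exists_riccatiMap_iterate_le hQ.posSemidef.nonneg hR hobs
  have hPsB : Pstar ≤ B := by simpa [Function.iterate_fixed hfix] using hB Pstar hPs n le_rfl
  obtain ⟨ε₀, hε₀, hε₀B⟩ := hQ.exists_pos_smul_le (hPs.trans hPsB).posSemidef.isHermitian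
  set ε := min ε₀ 1
  have hε : 0 < ε := lt_min hε₀ one_pos
  have hε1 : ε ≤ 1 := min_le_right _ _
  have hεB : ε • B ≤ Q :=
    (smul_le_smul_of_nonneg_right (min_le_left _ _) (hPs.trans hPsB)).trans hε₀B
  have hεPs : ε • Pstar ≤ Q := (smul_le_smul_of_nonneg_left hPsB hε.le).trans hεB
  have hQPs : Q ≤ Pstar := hfix ▸ le_riccatiMap hR hPs
  have hX : (riccatiMap A C Q R)^[n + 1] P₀ ∈
      Set.Icc ((1 - (1 - ε)) • Pstar) ((1 + (ε⁻¹ - 1)) • Pstar) := by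
    rw [sub_sub_cancel, add_sub_cancel]
    refine ⟨hεPs.trans ?_, (hB P₀ hP₀ (n + 1) n.le_succ).trans ?_⟩
    · rw [Function.iterate_succ_apply']
      exact le_riccatiMap hR ((riccatiMap_mapsTo hQ.posSemidef.nonneg hR).iterate n hP₀)
    · calc B = ε⁻¹ • (ε • B) := by rw [inv_smul_smul₀ hε.ne']
        _ ≤ ε⁻¹ • Q := smul_le_smul_of_nonneg_left hεB (inv_nonneg.2 hε.le)
        _ ≤ ε⁻¹ • Pstar := smul_le_smul_of_nonneg_left hQPs (inv_nonneg.2 hε.le)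
  have hbounds := riccatiMap_iterate_mem_Icc_smul hR hPs hfix hε.le hε1 hεPs (sub_nonneg.2 hε1)
    (sub_le_self _ hε.le) (sub_nonneg.2 ((one_le_inv₀ hε).2 hε1)) hX
  have hlim (c : ℝ) : Tendsto (fun q : ℕ => (1 + (1 - ε) ^ q * c) • Pstar) atTop (𝓝 Pstar) := by
    simpa using ((((tendsto_pow_atTop_nhds_zero_of_lt_one (sub_nonneg.2 hε1)
      (sub_lt_self 1 hε)).mul_const c).const_add 1).smul_const Pstar)
  have hshift := Matrix.tendsto_of_tendsto_of_tendsto_of_le_of_le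
    ((hlim (-(1 - ε))).congr fun q => by rw [mul_neg, ← sub_eq_add_neg]) (hlim (ε⁻¹ - 1))
    (fun q => (hbounds q).1) (fun q => (hbounds q).2)
  rw [← tendsto_add_atTop_iff_nat (n + 1)]
  simpa only [Function.iterate_add_apply] using hshift

end Riccati

/-- Existence, uniqueness, positive definiteness, and global attractivity of the
positive semidefinite fixed point of the Kalman filter Riccati iteration, under
observability of `(A, C)` and positive definiteness of `Q` and `R`. -/
theorem riccati_fixed_point_exists_unique_and_attractive
    {n p : ℕ} (A : Matrix (Fin n) (Fin n) ℝ) (C : Matrix (Fin p) (Fin n) ℝ)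
    (Q : Matrix (Fin n) (Fin n) ℝ) (R : Matrix (Fin p) (Fin p) ℝ)
    (hQ : Q.PosDef) (hR : R.PosDef) (hobs : ObservablePair A C) :
    ∃ Pstar : Matrix (Fin n) (Fin n) ℝ,
      Pstar.PosSemidef ∧ riccatiMap A C Q R Pstar = Pstar ∧ Pstar.PosDef ∧
      (∀ P' : Matrix (Fin n) (Fin n) ℝ,
        P'.PosSemidef → riccatiMap A C Q R P' = P' → P' = Pstar) ∧
      (∀ P₀ : Matrix (Fin n) (Fin n) ℝ, P₀.PosSemidef →
        ∀ i j, Tendsto (fun q : ℕ => ((riccatiMap A C Q R)^[q] P₀) i j)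
          atTop (nhds (Pstar i j))) := by
  obtain ⟨Pstar, hPs, hfix⟩ := exists_riccatiMap_fixedPoint hQ.posSemidef.nonneg hR hobs
  have hconv {P₀ : Matrix (Fin n) (Fin n) ℝ} (hP₀ : P₀.PosSemidef) :=
    tendsto_riccatiMap_iterate hQ hR hobs hPs hfix hP₀.nonneg
  refine ⟨Pstar, hPs.posSemidef, hfix, hfix ▸ riccatiMap_posDef hQ hR hPs,
    fun P' hP' hfix' => tendsto_nhds_unique ?_ (hconv hP'),
    fun P₀ hP₀ i j => ((hconv hP₀).apply_nhds i).apply_nhds j⟩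
  simp [Function.iterate_fixed hfix']
end

section
/- Let M and (M_q)_{q≥0} be real n×n matrices such that the spectral radius of M is strictly less than 1 and ‖M_q − M‖ ≤ a r^q for all q, for some constants a > 0 and r ∈ (0,1). Then the time-varying linear recursion e_{q+1} = M_q e_q is exponentially stable: there exist K > 0 and λ ∈ (0,1) such that for every initial vector e₀ ∈ ℝⁿ and every q ≥ 0, ‖e_q‖ ≤ K λ^q ‖e₀‖. -/
/-!
Pick `ρ(M) < μ < 1`; Gelfand's formula gives `m ≥ 1` with `‖M ^ m‖ ≤ μ ^ m`. The discounted
orbit sum `V x = ∑_{k<m} ‖M ^ k x‖ / μ ^ k` (`lyapunovNorm`) is equivalent to `‖x‖` and is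
contracted by `M` at rate `μ`: shifting the sum by one index trades the term `‖x‖` for
`‖M ^ m x‖ / μ ^ m ≤ ‖x‖`. Along `x_{q+1} = M_q x_q` this gives
`V x_{q+1} ≤ (μ + C ‖M_q - M‖) V x_q`, and since the perturbations `‖M_q - M‖` are summable,
the product of these factors is at most `exp (C / μ · ∑ ‖M_q - M‖) μ ^ q`.
-/

open Matrix Filter Finset Real
open scoped NNReal ENNReal

theorem eventually_nnnorm_pow_le_of_spectralRadius_lt {A : Type*} [NormedRing A]
    [NormedAlgebra ℂ A] [CompleteSpace A] {a : A} {μ : ℝ≥0} (h : spectralRadius ℂ a < μ) :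
    ∀ᶠ m : ℕ in atTop, ‖a ^ m‖₊ ≤ μ ^ m := by
  filter_upwards
    [(spectrum.pow_nnnorm_pow_one_div_tendsto_nhds_spectralRadius a).eventually_lt_const h,
      eventually_gt_atTop 0] with m hlt hm
  rw [one_div, ENNReal.rpow_inv_lt_iff (by positivity), ENNReal.rpow_natCast] at hlt
  exact_mod_cast hlt.le

section Lyapunov

variable {𝕜 E : Type*} [NontriviallyNormedField 𝕜] [SeminormedAddCommGroup E] [NormedSpace 𝕜 E]
  (T : E →L[𝕜] E) (μ : ℝ) (m : ℕ)

noncomputable def lyapunovNorm (x : E) : ℝ :=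
  ∑ k ∈ range m, ‖(T ^ k) x‖ / μ ^ k

variable {T μ m}

theorem lyapunovNorm_nonneg (hμ : 0 ≤ μ) (x : E) : 0 ≤ lyapunovNorm T μ m x :=
  sum_nonneg fun _ _ => by positivity

theorem norm_le_lyapunovNorm (hμ : 0 ≤ μ) (hm : 0 < m) (x : E) : ‖x‖ ≤ lyapunovNorm T μ m x := by
  have := single_le_sum (f := fun k => ‖(T ^ k) x‖ / μ ^ k) (fun _ _ => by positivity)
    (mem_range.mpr hm)
  simpa [lyapunovNorm] using this

theorem lyapunovNorm_le (hμ : 0 ≤ μ) (x : E) :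
    lyapunovNorm T μ m x ≤ (∑ k ∈ range m, ‖T ^ k‖ / μ ^ k) * ‖x‖ := by
  rw [lyapunovNorm, sum_mul]
  gcongr with k
  rw [div_mul_eq_mul_div]
  gcongr
  exact (T ^ k).le_opNorm x

theorem lyapunovNorm_add_le (hμ : 0 ≤ μ) (x y : E) :
    lyapunovNorm T μ m (x + y) ≤ lyapunovNorm T μ m x + lyapunovNorm T μ m y := by
  rw [lyapunovNorm, lyapunovNorm, lyapunovNorm, ← sum_add_distrib]
  gcongr with k
  rw [map_add, ← add_div]
  gcongr
  exact norm_add_le _ _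

theorem lyapunovNorm_apply_le (hμ : 0 < μ) (hT : ‖T ^ m‖ ≤ μ ^ m) (x : E) :
    lyapunovNorm T μ m (T x) ≤ μ * lyapunovNorm T μ m x := by
  set f : ℕ → ℝ := fun k => ‖(T ^ k) x‖ / μ ^ k
  have hshift : lyapunovNorm T μ m (T x) = μ * ∑ k ∈ range m, f (k + 1) := by
    rw [lyapunovNorm, mul_sum]
    refine sum_congr rfl fun k _ => ?_
    simp only [f, pow_succ T, mul_apply_eq_comp, pow_succ μ]
    field_simp
  have htail : f m ≤ f 0 := by
    simp only [f, pow_zero, one_apply_eq_self, div_one]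
    rw [div_le_iff₀ (by positivity)]
    calc ‖(T ^ m) x‖ ≤ ‖T ^ m‖ * ‖x‖ := (T ^ m).le_opNorm x
      _ ≤ ‖x‖ * μ ^ m := by rw [mul_comm]; gcongr
  have hsucc' := sum_range_succ' f m
  have hsucc := sum_range_succ f m
  rw [hshift]
  gcongr
  change _ ≤ ∑ k ∈ range m, f k
  linarith

theorem lyapunovNorm_apply_le_of_norm_sub (hμ : 0 < μ) (hm : 0 < m) (hT : ‖T ^ m‖ ≤ μ ^ m)
    (S : E →L[𝕜] E) (x : E) :
    lyapunovNorm T μ m (S x) ≤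
      (μ + (∑ k ∈ range m, ‖T ^ k‖ / μ ^ k) * ‖S - T‖) * lyapunovNorm T μ m x := by
  set C := ∑ k ∈ range m, ‖T ^ k‖ / μ ^ k
  have hC : 0 ≤ C := sum_nonneg fun _ _ => by positivity
  calc lyapunovNorm T μ m (S x)
      = lyapunovNorm T μ m (T x + (S - T) x) := by
        rw [_root_.sub_apply, add_sub_cancel]
    _ ≤ μ * lyapunovNorm T μ m x + C * (‖S - T‖ * lyapunovNorm T μ m x) := by
      refine (lyapunovNorm_add_le hμ.le _ _).trans (add_le_add (lyapunovNorm_apply_le hμ hT x) ?_)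
      refine (lyapunovNorm_le hμ.le _).trans ?_
      gcongr
      exact ((S - T).le_opNorm x).trans (by gcongr; exact norm_le_lyapunovNorm hμ.le hm x)
    _ = (μ + C * ‖S - T‖) * lyapunovNorm T μ m x := by ring

end Lyapunov

theorem le_prod_range_mul_of_succ_le {v c : ℕ → ℝ} (hc : ∀ q, 0 ≤ c q)
    (hv : ∀ q, v (q + 1) ≤ c q * v q) (q : ℕ) : v q ≤ (∏ j ∈ range q, c j) * v 0 := by
  induction q with
  | zero => simp
  | succ q ih =>
    calc v (q + 1) ≤ c q * v q := hv q
      _ ≤ c q * ((∏ j ∈ range q, c j) * v 0) := by gcongr; exact hc q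
      _ = (∏ j ∈ range (q + 1), c j) * v 0 := by rw [prod_range_succ]; ring

theorem prod_range_add_mul_le {μ C : ℝ} {δ : ℕ → ℝ} (hμ : 0 < μ) (hC : 0 ≤ C)
    (hδ₀ : ∀ j, 0 ≤ δ j) (hδ : Summable δ) (q : ℕ) :
    ∏ j ∈ range q, (μ + C * δ j) ≤ exp (C / μ * ∑' j, δ j) * μ ^ q := by
  have hfactor : ∀ j, μ + C * δ j = μ * (1 + C / μ * δ j) := fun j => by field_simp
  simp only [hfactor, prod_mul_distrib, prod_const, card_range]
  rw [mul_comm]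
  gcongr
  calc ∏ j ∈ range q, (1 + C / μ * δ j) ≤ exp (∑ j ∈ range q, C / μ * δ j) :=
        prod_one_add_le_exp_sum _ fun j => by have := hδ₀ j; positivity
    _ ≤ exp (C / μ * ∑' j, δ j) := by
        rw [← mul_sum]
        gcongr
        exact hδ.sum_le_tsum _ fun j _ => hδ₀ j

theorem exists_norm_le_mul_pow_of_summable_norm_sub {𝕜 E : Type*} [NontriviallyNormedField 𝕜]
    [SeminormedAddCommGroup E] [NormedSpace 𝕜 E] {T : E →L[𝕜] E} {μ : ℝ} {m : ℕ} (hμ : 0 < μ)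
    (hm : 0 < m) (hT : ‖T ^ m‖ ≤ μ ^ m) {S : ℕ → E →L[𝕜] E} {δ : ℕ → ℝ} (hδ : Summable δ)
    (hS : ∀ q, ‖S q - T‖ ≤ δ q) :
    ∃ K > 0, ∀ x : ℕ → E, (∀ q, x (q + 1) = S q (x q)) → ∀ q, ‖x q‖ ≤ K * μ ^ q * ‖x 0‖ := by
  set C := ∑ k ∈ range m, ‖T ^ k‖ / μ ^ k
  have hC : 0 ≤ C := sum_nonneg fun _ _ => by positivity
  have hδ₀ : ∀ q, 0 ≤ δ q := fun q => (norm_nonneg _).trans (hS q)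
  set G := exp (C / μ * ∑' j, δ j)
  refine ⟨C * G + 1, by positivity, fun x hx q => ?_⟩
  have hstep : ∀ q, lyapunovNorm T μ m (x (q + 1)) ≤ (μ + C * δ q) * lyapunovNorm T μ m (x q) :=
    fun q => by
      rw [hx]
      refine (lyapunovNorm_apply_le_of_norm_sub hμ hm hT _ _).trans ?_
      gcongr
      · exact lyapunovNorm_nonneg hμ.le _
      · exact hS q
  calc ‖x q‖ ≤ lyapunovNorm T μ m (x q) := norm_le_lyapunovNorm hμ.le hm _
    _ ≤ (∏ j ∈ range q, (μ + C * δ j)) * lyapunovNorm T μ m (x 0) :=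
      le_prod_range_mul_of_succ_le (v := fun q => lyapunovNorm T μ m (x q))
        (fun j => by have := hδ₀ j; positivity) hstep q
    _ ≤ (G * μ ^ q) * (C * ‖x 0‖) := by
      gcongr
      · exact lyapunovNorm_nonneg hμ.le _
      · exact prod_range_add_mul_le hμ hC hδ₀ hδ q
      · exact lyapunovNorm_le hμ.le _
    _ = C * G * μ ^ q * ‖x 0‖ := by ring
    _ ≤ (C * G + 1) * μ ^ q * ‖x 0‖ := by gcongr; linarith

attribute [local instance] Matrix.linftyOpSeminormedAddCommGroup Matrix.linftyOpNormedRing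
  Matrix.linftyOpNormedAlgebra

namespace Matrix

theorem linfty_opNorm_le_card_mul {ι κ α : Type*} [Fintype ι] [Fintype κ]
    [SeminormedAddCommGroup α] {A : Matrix ι κ α} {c : ℝ} (hc : 0 ≤ c)
    (h : ∀ i j, ‖A i j‖ ≤ c) : ‖A‖ ≤ Fintype.card κ * c := by
  lift c to ℝ≥0 using hc
  rw [← coe_nnnorm, ← NNReal.coe_natCast, ← NNReal.coe_mul, NNReal.coe_le_coe,
    linfty_opNNNorm_def]
  refine Finset.sup_le fun i _ => ?_
  calc ∑ j, ‖A i j‖₊ ≤ ∑ _j : κ, c := sum_le_sum fun j _ => by exact_mod_cast h i j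
    _ = Fintype.card κ * c := by simp

theorem eventually_linfty_opNorm_pow_le {ι : Type*} [Fintype ι] [DecidableEq ι]
    (M : Matrix ι ι ℝ) {μ : ℝ≥0} (h : spectralRadius ℂ (M.map (fun t : ℝ => (t : ℂ))) < μ) :
    ∀ᶠ m : ℕ in atTop, ‖M ^ m‖ ≤ μ ^ m := by
  filter_upwards [eventually_nnnorm_pow_le_of_spectralRadius_lt h] with m hm
  have hpow : M.map (fun t : ℝ => (t : ℂ)) ^ m = (M ^ m).map (fun t : ℝ => (t : ℂ)) :=
    (map_pow Complex.ofRealHom.mapMatrix M m).symm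
  have hnorm : ‖(M ^ m).map (fun t : ℝ => (t : ℂ))‖₊ = ‖M ^ m‖₊ := by
    simp [linfty_opNNNorm_def]
  rw [hpow, hnorm] at hm
  exact_mod_cast hm

theorem linfty_opNorm_toContinuousLinearMap_toLinAlgEquiv' {ι : Type*} [Fintype ι]
    [DecidableEq ι] (A : Matrix ι ι ℝ) :
    ‖Module.End.toContinuousLinearMap (ι → ℝ) (toLinAlgEquiv' A)‖ = ‖A‖ :=
  (linfty_opNorm_eq_opNorm A).symm

end Matrix

/-- If the matrices `M_q` converge exponentially (entrywise, i.e. in the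
elementwise-sup matrix norm) to a matrix `M` whose spectral radius is `< 1`,
then the time-varying linear recursion `e_{q+1} = M_q e_q` is exponentially
stable. -/
theorem time_varying_recursion_exponentially_stable {n : ℕ}
    (M : Matrix (Fin n) (Fin n) ℝ) (Mq : ℕ → Matrix (Fin n) (Fin n) ℝ)
    (a r : ℝ) (ha : 0 < a) (hr : r ∈ Set.Ioo (0 : ℝ) 1)
    (hρ : spectralRadius ℂ (M.map (fun t : ℝ => (t : ℂ))) < 1)
    (hconv : ∀ q : ℕ, ∀ i j, |(Mq q - M) i j| ≤ a * r ^ q) :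
    ∃ K > (0 : ℝ), ∃ lam ∈ Set.Ioo (0 : ℝ) 1,
      ∀ e : ℕ → (Fin n → ℝ), (∀ q : ℕ, e (q + 1) = (Mq q).mulVec (e q)) →
        ∀ q : ℕ, ‖e q‖ ≤ K * lam ^ q * ‖e 0‖ := by
  obtain ⟨hr₀, hr₁⟩ := hr
  obtain ⟨μ, hρμ, hμ₁⟩ := ENNReal.lt_iff_exists_nnreal_btwn.mp hρ
  have hμ₀ : (0 : ℝ) < μ := by exact_mod_cast pos_of_gt hρμ
  obtain ⟨m, hMm, hm⟩ :=
    (M.eventually_linfty_opNorm_pow_le hρμ |>.and (eventually_gt_atTop 0)).exists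
  have hΔ : ∀ q, ‖Mq q - M‖ ≤ n * a * r ^ q := fun q => by
    simpa [mul_assoc] using linfty_opNorm_le_card_mul (by positivity)
      fun i j => (Real.norm_eq_abs _).trans_le (hconv q i j)
  set Φ := toLinAlgEquiv'.trans (Module.End.toContinuousLinearMap (Fin n → ℝ))
  have hΦ : ∀ A, ‖Φ A‖ = ‖A‖ := linfty_opNorm_toContinuousLinearMap_toLinAlgEquiv'
  obtain ⟨K, hK, hbound⟩ := exists_norm_le_mul_pow_of_summable_norm_sub (T := Φ M)
    (S := fun q => Φ (Mq q)) hμ₀ hm (by rwa [← map_pow, hΦ])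
    ((summable_geometric_of_lt_one hr₀.le hr₁).mul_left (n * a))
    (fun q => by rw [← map_sub, hΦ]; exact hΔ q)
  exact ⟨K, hK, μ, ⟨hμ₀, by exact_mod_cast hμ₁⟩, hbound⟩
end
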